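/- Let (M_1,…,M_m) be an ℕ^m-valued random vector on a probability space such that E[∏_{j=1}^m b_j^{2M_j}] < ∞ for every (b_1,…,b_m) ∈ (0,∞)^m. Then the closed linear span in L² of the set of random variables {∏_{j=1}^m b_j^{M_j} : (b_1,…,b_m) ∈ (0,∞)^m} equals L² of the σ-field σ(M_1,…,M_m), i.e., these exponential monomials are total in L²(σ(M_1,…,M_m)). -/

import Mathlib

/-!
Pushing forward along `M` reduces everything to the law `μ` of `M`, a discrete measure on `ℕ^m`,
and writes `F = g ∘ M`. Orthogonality of `F` to `b^M` then says that the power series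
`∑ₙ μ{n} g(n) bⁿ`, absolutely convergent on `(0,1]^m`, vanishes identically there. Its constant
coefficient is its value at `b = 0`, hence zero by continuity; dividing by `b₀` and inducting on
the exponents and the number of variables kills every coefficient `μ{n} g(n)`. So `g = 0` `μ`-a.e.
-/

open MeasureTheory Set

theorem Summable.mul_of_norm_le_one {ι : Type*} {c w : ι → ℂ} (hc : Summable c)
    (hw : ∀ i, ‖w i‖ ≤ 1) : Summable fun i ↦ c i * w i :=
  .of_norm_bounded (summable_norm_iff.mpr hc) fun i ↦ by
    rw [norm_mul]; exact mul_le_of_le_one_right (norm_nonneg _) (hw i)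

theorem norm_ofReal_pow_le_one {x : ℝ} (hx : x ∈ Icc 0 1) (k : ℕ) : ‖(x : ℂ) ^ k‖ ≤ 1 := by
  rw [norm_pow, Complex.norm_real, Real.norm_of_nonneg hx.1]
  exact pow_le_one₀ hx.1 hx.2

theorem norm_prod_ofReal_pow_le_one {ι : Type*} [Fintype ι] {b : ι → ℝ}
    (hb : ∀ j, b j ∈ Icc 0 1) (n : ι → ℕ) : ‖∏ j, (b j : ℂ) ^ n j‖ ≤ 1 := by
  rw [norm_prod]
  exact Finset.prod_le_one (fun _ _ ↦ norm_nonneg _) fun j _ ↦ norm_ofReal_pow_le_one (hb j) _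

theorem apply_zero_eq_zero_of_tsum_mul_pow_eq_zero {a : ℕ → ℂ} (ha : Summable a)
    (h : ∀ x ∈ Ioc (0 : ℝ) 1, ∑' k, a k * (x : ℂ) ^ k = 0) : a 0 = 0 := by
  have hcont : ContinuousOn (fun x : ℝ ↦ ∑' k, a k * (x : ℂ) ^ k) (Icc 0 1) := by
    refine continuousOn_tsum (fun k ↦ by fun_prop) (summable_norm_iff.mpr ha) fun k x hx ↦ ?_
    rw [norm_mul]
    exact mul_le_of_le_one_right (norm_nonneg _) (norm_ofReal_pow_le_one hx k)
  have hzero : EqOn (fun x : ℝ ↦ ∑' k, a k * (x : ℂ) ^ k) 0 (Icc 0 1) :=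
    EqOn.of_subset_closure h hcont continuousOn_const Ioc_subset_Icc_self
      (closure_Ioc zero_ne_one).ge
  have hvalue : ∑' k, a k * ((0 : ℝ) : ℂ) ^ k = a 0 := by
    rw [tsum_eq_single 0 fun k hk ↦ by simp [hk]]
    simp
  exact hvalue ▸ hzero (left_mem_Icc.mpr zero_le_one)

theorem eq_zero_of_tsum_mul_pow_eq_zero {a : ℕ → ℂ} (ha : Summable a)
    (h : ∀ x ∈ Ioc (0 : ℝ) 1, ∑' k, a k * (x : ℂ) ^ k = 0) : a = 0 := by
  funext k
  induction k generalizing a with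
  | zero => exact apply_zero_eq_zero_of_tsum_mul_pow_eq_zero ha h
  | succ k ih =>
    refine ih (a := fun k ↦ a (k + 1)) ((summable_nat_add_iff 1).mpr ha) fun x hx ↦ ?_
    have hx0 : (x : ℂ) ≠ 0 := by exact_mod_cast hx.1.ne'
    have hsum : Summable fun k ↦ a k * (x : ℂ) ^ k :=
      ha.mul_of_norm_le_one (norm_ofReal_pow_le_one (Ioc_subset_Icc_self hx))
    have hshift : (∑' k, a (k + 1) * (x : ℂ) ^ k) * x = 0 := by
      rw [← tsum_mul_right, ← h x hx, hsum.tsum_eq_zero_add,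
        apply_zero_eq_zero_of_tsum_mul_pow_eq_zero ha h, zero_mul, zero_add]
      simp_rw [pow_succ, mul_assoc]
    exact (mul_eq_zero.mp hshift).resolve_right hx0

theorem Summable.hasSum_fin_cons {α E : Type*} [NormedAddCommGroup E] [CompleteSpace E] {m : ℕ}
    {f : (Fin (m + 1) → α) → E} (hf : Summable f) :
    HasSum (fun k ↦ ∑' n, f (Fin.cons k n)) (∑' n, f n) := by
  have hprod := (Fin.consEquiv fun _ ↦ α).summable_iff.mpr hf
  rw [← (Fin.consEquiv fun _ ↦ α).tsum_eq]
  exact hprod.hasSum.prod_fiberwise fun k ↦ (hprod.prod_factor k).hasSum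

theorem prod_fin_cons_ofReal_pow {m : ℕ} (x : ℝ) (b : Fin m → ℝ) (k : ℕ) (n : Fin m → ℕ) :
    ∏ j, ((Fin.cons x b : Fin (m + 1) → ℝ) j : ℂ) ^ (Fin.cons k n : Fin (m + 1) → ℕ) j =
      (x : ℂ) ^ k * ∏ j, (b j : ℂ) ^ n j := by
  simp [Fin.prod_univ_succ]

theorem eq_zero_of_tsum_mul_prod_pow_eq_zero {m : ℕ} {c : (Fin m → ℕ) → ℂ} (hc : Summable c)
    (h : ∀ b : Fin m → ℝ, (∀ j, b j ∈ Ioc 0 1) → ∑' n, c n * ∏ j, (b j : ℂ) ^ n j = 0) :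
    c = 0 := by
  induction m with
  | zero =>
    funext n
    simpa [tsum_fintype, Unique.eq_default n] using h default finZeroElim
  | succ m ih =>
    have hsum : ∀ b : Fin (m + 1) → ℝ, (∀ j, b j ∈ Ioc 0 1) →
        Summable fun n ↦ c n * ∏ j, (b j : ℂ) ^ n j := fun b hb ↦
      hc.mul_of_norm_le_one (norm_prod_ofReal_pow_le_one fun j ↦ Ioc_subset_Icc_self (hb j))
    -- Grouping by the first exponent gives a one-variable power series in `b 0`.
    have hfiber : ∀ k, ∀ b : Fin m → ℝ, (∀ j, b j ∈ Ioc 0 1) →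
        ∑' n, c (Fin.cons k n) * ∏ j, (b j : ℂ) ^ n j = 0 := by
      intro k b hb
      have hcons : ∀ x ∈ Ioc (0 : ℝ) 1, ∀ j, (Fin.cons x b : Fin (m + 1) → ℝ) j ∈ Ioc 0 1 :=
        fun x hx ↦ Fin.cases hx hb
      refine congrFun (eq_zero_of_tsum_mul_pow_eq_zero
        (a := fun k ↦ ∑' n, c (Fin.cons k n) * ∏ j, (b j : ℂ) ^ n j) ?_ fun x hx ↦ ?_) k
      · simpa [prod_fin_cons_ofReal_pow] using
          (hsum _ (hcons 1 (right_mem_Ioc.mpr zero_lt_one))).hasSum_fin_cons.summable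
      · rw [← h _ (hcons x hx), ← (hsum _ (hcons x hx)).hasSum_fin_cons.tsum_eq]
        refine tsum_congr fun k ↦ ?_
        rw [← tsum_mul_right]
        exact tsum_congr fun n ↦ by rw [prod_fin_cons_ofReal_pow]; ring
    funext n
    rw [← Fin.cons_self_tail n]
    exact congrFun (ih (hc.comp_injective (Fin.cons_right_injective _)) (hfiber (n 0))) _

theorem MeasureTheory.Integrable.hasSum_measureReal_smul {X E : Type*} [MeasurableSpace X]
    [MeasurableSingletonClass X] [Countable X] [NormedAddCommGroup E] [NormedSpace ℝ E]
    [CompleteSpace E] {μ : Measure X} {f : X → E} (hf : Integrable f μ) :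
    HasSum (fun x ↦ μ.real {x} • f x) (∫ x, f x ∂μ) := by
  rw [← Measure.sum_smul_dirac μ] at hf
  simpa [integral_smul_measure, measureReal_def, Measure.sum_smul_dirac] using
    hasSum_integral_measure hf

theorem ae_eq_zero_of_integral_mul_prod_pow_eq_zero {m : ℕ} {μ : Measure (Fin m → ℕ)}
    [IsFiniteMeasure μ] {g : (Fin m → ℕ) → ℂ} (hg : Integrable g μ)
    (h : ∀ b : Fin m → ℝ, (∀ j, b j ∈ Ioc 0 1) → ∫ n, g n * ∏ j, (b j : ℂ) ^ n j ∂μ = 0) :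
    g =ᵐ[μ] 0 := by
  have hc : (fun n ↦ μ.real {n} • g n) = 0 := by
    refine eq_zero_of_tsum_mul_prod_pow_eq_zero hg.hasSum_measureReal_smul.summable fun b hb ↦ ?_
    have hint : Integrable (fun n ↦ g n * ∏ j, (b j : ℂ) ^ n j) μ :=
      hg.mul_bdd .of_discrete (ae_of_all _
        (norm_prod_ofReal_pow_le_one fun j ↦ Ioc_subset_Icc_self (hb j)))
    simpa only [smul_mul_assoc] using hint.hasSum_measureReal_smul.tsum_eq.trans (h b hb)
  refine ae_iff_of_countable.mpr fun n hn ↦ ?_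
  simpa [measureReal_def, ENNReal.toReal_eq_zero_iff, hn] using congrFun hc n

theorem memLp_two_prod_ofReal_pow {Ω : Type*} [MeasurableSpace Ω] {P : Measure Ω} {m : ℕ}
    {M : Fin m → Ω → ℕ} (hM : ∀ j, Measurable (M j)) {b : Fin m → ℝ}
    (hmom : ∫⁻ ω, ENNReal.ofReal (∏ j, b j ^ (2 * M j ω)) ∂P < ⊤) :
    MemLp (fun ω ↦ ∏ j, (b j : ℂ) ^ M j ω) 2 P := by
  have hmeas : Measurable fun ω ↦ ∏ j, (b j : ℂ) ^ M j ω := by fun_prop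
  rw [memLp_two_iff_integrable_sq_norm hmeas.aestronglyMeasurable]
  refine ⟨by fun_prop, (hasFiniteIntegral_iff_ofReal (ae_of_all _ fun ω ↦ sq_nonneg _)).mpr ?_⟩
  convert hmom using 4 with ω
  simp only [norm_prod, norm_pow, Complex.norm_real, Real.norm_eq_abs, ← Finset.prod_pow]
  exact Finset.prod_congr rfl fun j _ ↦ by rw [← pow_mul, mul_comm, pow_mul, sq_abs, ← pow_mul]

theorem exponential_monomials_total
    {Ω : Type*} [MeasurableSpace Ω] (P : Measure Ω) [IsProbabilityMeasure P]
    (m : ℕ) (M : Fin m → Ω → ℕ) (hM : ∀ j, Measurable (M j))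
    (hmom : ∀ b : Fin m → ℝ, (∀ j, 0 < b j) →
      ∫⁻ ω, ENNReal.ofReal (∏ j, (b j) ^ (2 * M j ω)) ∂P < ⊤) :
    (∀ b : Fin m → ℝ, (∀ j, 0 < b j) →
      MemLp (fun ω => ∏ j, ((b j : ℂ)) ^ (M j ω)) 2 P) ∧
    (∀ F : Ω → ℂ, MemLp F 2 P →
      Measurable[MeasurableSpace.comap (fun ω (j : Fin m) => M j ω) inferInstance] F →
      (∀ b : Fin m → ℝ, (∀ j, 0 < b j) →
        ∫ ω, F ω * (starRingEnd ℂ) (∏ j, ((b j : ℂ)) ^ (M j ω)) ∂P = 0) →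
      F =ᵐ[P] 0) := by
  refine ⟨fun b hb ↦ memLp_two_prod_ofReal_pow hM (hmom b hb), fun F hF hFM horth ↦ ?_⟩
  have hφ : AEMeasurable (fun ω (j : Fin m) ↦ M j ω) P := (measurable_pi_lambda _ hM).aemeasurable
  obtain ⟨g, hg, rfl⟩ := hFM.exists_eq_measurable_comp
  have := Measure.isProbabilityMeasure_map (μ := P) hφ
  refine ae_of_ae_map hφ (ae_eq_zero_of_integral_mul_prod_pow_eq_zero ?_ fun b hb ↦ ?_)
  · rw [integrable_map_measure hg.aestronglyMeasurable hφ]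
    exact hF.integrable one_le_two
  · rw [integral_map hφ .of_discrete]
    simpa [map_prod] using horth b fun j ↦ (hb j).1
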